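/- arXiv:2307.09736 — 2 statements merged into one kernel-verified Lean document; each statement's English description precedes it below -/
import Mathlib

section
/- Let G be a strongly regular graph with parameters (n,k,λ,μ), let H be a symmetric [α]-Hadamard matrix of order ζ ≥ 2 (with 0 ≤ α ≤ ζ), and let θ = max{k/2, λ, μ, (n−k−1)/2, n−2−2k+μ, n−2k+λ}. If ζ is even or ⌈(4θα+1)/ζ⌉ − 1 is even, then n+1 ≤ M_ζ(K_{2, θ(ζ+α)+1}; 2) ≤ 4θ + 2 + ⌈(4θα+1)/ζ⌉. -/
open Finset Matrix

/-- The complete multipartite graph `K_{c×s}` with `c` partite sets, each of size `s`,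
on the vertex set `Fin c × Fin s`. -/
def multiK (c s : ℕ) : SimpleGraph (Fin c × Fin s) where
  Adj v w := v.1 ≠ w.1
  symm := ⟨fun _ _ h => Ne.symm h⟩
  loopless := ⟨fun _ h => h rfl⟩

/-- The symmetric edge `k`-coloring `C` of the graph `G` contains a monochromatic copy of the
complete bipartite graph `K_{2,n}` in color `i`: there are two distinct vertices `a b` and a
set `S` of `n` further vertices all joined to both `a` and `b` by edges of color `i`. -/
def HasMonoK2 {V : Type*} (G : SimpleGraph V) {k : ℕ}
    (C : V → V → Fin k) (i : Fin k) (n : ℕ) : Prop :=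
  ∃ (a b : V) (S : Finset V), a ≠ b ∧ a ∉ S ∧ b ∉ S ∧ S.card = n ∧
    ∀ v ∈ S, G.Adj a v ∧ G.Adj b v ∧ C a v = i ∧ C b v = i

/-- Every symmetric `k`-coloring of the edges of `K_{c×s}` contains a monochromatic copy of
`K_{2, ns i}` in some color `i`. -/
def ArrowsVec (c s k : ℕ) (ns : Fin k → ℕ) : Prop :=
  ∀ C : (Fin c × Fin s) → (Fin c × Fin s) → Fin k,
    (∀ v w, C v w = C w v) → ∃ i : Fin k, HasMonoK2 (multiK c s) C i (ns i)

/-- Every symmetric `k`-coloring of the edges of `K_{c×s}` contains a monochromatic `K_{2,n}`. -/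
def Arrows (c s n k : ℕ) : Prop := ArrowsVec c s k (fun _ => n)

/-- The set multipartite Ramsey number `M_s(K_{2,n}; k)`: the smallest positive integer `c` such
that every `k`-coloring of the edges of `K_{c×s}` contains a monochromatic `K_{2,n}`. -/
noncomputable def setRamsey (s n k : ℕ) : ℕ := sInf {c : ℕ | 0 < c ∧ Arrows c s n k}

/-- The size multipartite Ramsey number `m_c(K_{2,n}; k)`: the smallest positive integer `s` such
that every `k`-coloring of the edges of `K_{c×s}` contains a monochromatic `K_{2,n}`. -/
noncomputable def sizeRamsey (c n k : ℕ) : ℕ := sInf {s : ℕ | 0 < s ∧ Arrows c s n k}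

/-- The size multipartite Ramsey number `m_c(K_{2,n₁},…,K_{2,n_k})`. -/
noncomputable def sizeRamseyVec (c k : ℕ) (ns : Fin k → ℕ) : ℕ :=
  sInf {s : ℕ | 0 < s ∧ ArrowsVec c s k ns}

/-- All entries of the matrix `H` are `1` or `-1`. -/
def PMOne {ι : Type*} (H : Matrix ι ι ℤ) : Prop := ∀ i j, H i j = 1 ∨ H i j = -1

/-- `H` is an `[α]`-Hadamard matrix: a square `±1` matrix such that `α` is an upper bound for
`|(H * Hᵀ) i j|` over all pairs `i ≠ j`. -/
def IsBHadamard {ι : Type*} [Fintype ι] (α : ℕ) (H : Matrix ι ι ℤ) : Prop :=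
  PMOne H ∧ ∀ i j, i ≠ j → |(H * Hᵀ) i j| ≤ (α : ℤ)

/-- `H` is an `α`-Hadamard matrix: a square `±1` matrix such that `α` is the maximum of
`|(H * Hᵀ) i j|` over all pairs `i ≠ j`. -/
def IsEHadamard {ι : Type*} [Fintype ι] (α : ℕ) (H : Matrix ι ι ℤ) : Prop :=
  IsBHadamard α H ∧ ∃ i j, i ≠ j ∧ |(H * Hᵀ) i j| = (α : ℤ)

/-- `H` is a Hadamard matrix: a square `±1` matrix with `H * Hᵀ = ζ • 1`. -/
def IsHadamard {ι : Type*} [Fintype ι] [DecidableEq ι] (H : Matrix ι ι ℤ) : Prop :=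
  PMOne H ∧ H * Hᵀ = (Fintype.card ι : ℤ) • (1 : Matrix ι ι ℤ)

/-!
Lower bound. For `c ≤ n`, embed `Fin c` into the vertices of `G` and colour `K_{c×ζ}` by the signs
of the Kronecker product of the `±1` adjacency matrix of `G` with `H`. If the centres `(x, i)` and
`(y, j)` of a monochromatic `K_{2,m}` lie in different parts, then in each column `s` the leaves are
vertices with one prescribed adjacency pattern towards `x` and `y`; counting with the parameters of
`G` (and the identity `k(k-ℓ-1) = (n-k-1)μ`) bounds each such class by `θ`, so `m ≤ ζθ`. If they
lie in the same part, a column can carry leaves only where rows `i` and `j` of `H` agree, which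
happens at most `(ζ+α)/2` times, and then at most `2θ` of them. Either way `m ≤ θ(ζ+α) = T`.

Upper bound. Without a monochromatic `K_{2,T+1}` any two vertices have at most `T` common
neighbours in each colour. Counting monochromatic paths of length two through each vertex of the
`(c-1)ζ`-regular graph `K_{c×ζ}` shows that this is impossible for `c = 4θ + 2 + ⌈(4θα+1)/ζ⌉`.
-/

def srgTheta (n k ℓ μ : ℕ) : ℚ :=
  max (max (max ((k : ℚ) / 2) (ℓ : ℚ)) (max ((μ : ℚ)) (((n : ℚ) - k - 1) / 2)))
    (max ((n : ℚ) - 2 - 2 * k + μ) ((n : ℚ) - 2 * k + ℓ))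

lemma srgTheta_nonneg (n k ℓ μ : ℕ) : 0 ≤ srgTheta n k ℓ μ :=
  le_max_of_le_left (le_max_of_le_left (le_max_of_le_left (by positivity)))

lemma exists_intCast_eq_two_mul_srgTheta (n k ℓ μ : ℕ) :
    ∃ z : ℤ, (z : ℚ) = 2 * srgTheta n k ℓ μ :=
  ⟨max (max (max k (2 * ℓ)) (max (2 * μ) (n - k - 1)))
      (max (2 * (n - 2 - 2 * k + μ)) (2 * (n - 2 * k + ℓ))), by
    simp only [srgTheta, mul_max_of_nonneg _ _ (zero_le_two : (0 : ℚ) ≤ 2)]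
    push_cast
    ring_nf⟩

lemma exists_natCast_eq_four_mul_srgTheta_add (n k ℓ μ : ℕ) {m : ℤ} (hm : 0 ≤ m) :
    ∃ c : ℕ, 0 < c ∧ (c : ℚ) = 4 * srgTheta n k ℓ μ + 2 + m := by
  obtain ⟨z, hz⟩ := exists_intCast_eq_two_mul_srgTheta n k ℓ μ
  have hz₀ : 0 ≤ z := by
    exact_mod_cast hz ▸ mul_nonneg zero_le_two (srgTheta_nonneg n k ℓ μ)
  refine ⟨(2 * z + 2 + m).toNat, by omega, ?_⟩
  rw [← Int.cast_natCast, Int.toNat_of_nonneg (by omega)]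
  push_cast
  rw [hz]
  ring

lemma sub_one_sub_le_max_of_param_eq {n k ℓ μ : ℤ} (hℓ : 0 ≤ ℓ) (hμ : 0 ≤ μ)
    (h : k * (k - ℓ - 1) = (n - k - 1) * μ) :
    k - ℓ - 1 ≤ max μ (n - 2 - 2 * k + μ) := by
  by_contra! hlt
  have key : μ * (n - 3 * k + ℓ + μ) = (k - μ) * (k - 1 - ℓ - μ) := by linear_combination -h
  nlinarith [max_lt_iff.mp hlt]

lemma sub_le_max_of_param_eq {n k ℓ μ : ℤ} (hℓ : 0 ≤ ℓ) (hμ : 0 ≤ μ)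
    (hn : 0 ≤ n - 2 - 2 * k + μ) (h : k * (k - ℓ - 1) = (n - k - 1) * μ) :
    k - μ ≤ max ℓ (n - 2 * k + ℓ) := by
  by_contra! hlt
  obtain ⟨h₁, h₂⟩ := max_lt_iff.mp hlt
  have key : μ * (n - 3 * k + ℓ + μ) = (k - μ) * (k - 1 - ℓ - μ) := by linear_combination -h
  rcases hμ.eq_or_lt with rfl | hμ
  · nlinarith
  · nlinarith

namespace SimpleGraph

variable {V : Type*} [Fintype V] {G : SimpleGraph V} [DecidableRel G.Adj] {n k ℓ μ : ℕ}

lemma IsSRGWith.param_eq_int [Nonempty V] (hG : G.IsSRGWith n k ℓ μ) :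
    (k : ℤ) * (k - ℓ - 1) = (n - k - 1) * μ := by
  have hn : 0 < n := hG.card ▸ Fintype.card_pos
  obtain ⟨x⟩ := ‹Nonempty V›
  have hkn : k < n := hG.card ▸ hG.regular x ▸ G.degree_lt_card_verts x
  have h := congrArg (Nat.cast : ℕ → ℤ) (hG.param_eq G hn)
  rcases Nat.eq_zero_or_pos k with rfl | hk
  · simp only [zero_mul, Nat.sub_zero, Nat.cast_zero, Nat.cast_mul] at h
    push_cast [Nat.cast_sub hn] at h
    simp [← h]
  have : 0 < #(G.neighborFinset x) := by rwa [card_neighborFinset_eq_degree, hG.regular x]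
  obtain ⟨y, hy⟩ := card_pos.mp this
  rw [mem_neighborFinset] at hy
  have hℓk : ℓ < k := hG.of_adj x y hy ▸ hG.regular x ▸ hy.card_commonNeighbors_lt_degree
  push_cast [Nat.sub_sub, Nat.cast_sub (by omega : ℓ + 1 ≤ k),
    Nat.cast_sub (by omega : k + 1 ≤ n)] at h
  linear_combination h

variable [DecidableEq V]

section Counting

variable (G)

lemma degree_eq_card_filter_adj_add (x y : V) :
    G.degree x = #{v | v ≠ x ∧ v ≠ y ∧ G.Adj x v ∧ G.Adj y v}
      + #{v | v ≠ x ∧ v ≠ y ∧ G.Adj x v ∧ ¬G.Adj y v} + if G.Adj x y then 1 else 0 := by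
  rw [← card_neighborFinset_eq_degree, neighborFinset_eq_filter]
  simp only [card_filter]
  rw [← Fintype.sum_ite_eq' y (fun _ => if G.Adj x y then 1 else 0), ← sum_add_distrib,
    ← sum_add_distrib]
  refine sum_congr rfl fun v _ => ?_
  by_cases hvx : v = x <;> by_cases hvy : v = y <;> split_ifs <;> simp_all

lemma card_eq_card_filter_adj_add {x y : V} (hxy : x ≠ y) :
    Fintype.card V = #{v | v ≠ x ∧ v ≠ y ∧ G.Adj x v ∧ G.Adj y v}
      + #{v | v ≠ x ∧ v ≠ y ∧ G.Adj x v ∧ ¬G.Adj y v}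
      + #{v | v ≠ x ∧ v ≠ y ∧ ¬G.Adj x v ∧ G.Adj y v}
      + #{v | v ≠ x ∧ v ≠ y ∧ ¬G.Adj x v ∧ ¬G.Adj y v} + 2 := by
  have h2 : 2 = ∑ v : V, ((if v = x then 1 else 0) + if v = y then 1 else 0) := by
    simp [sum_add_distrib]
  rw [← card_univ, card_eq_sum_ones, h2]
  simp only [card_filter, ← sum_add_distrib]
  refine sum_congr rfl fun v _ => ?_
  split_ifs <;> simp_all

lemma card_eq_degree_add_card_filter_not_adj (x : V) :
    Fintype.card V = G.degree x + #{v | v ≠ x ∧ ¬G.Adj x v} + 1 := by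
  rw [← card_neighborFinset_eq_degree, neighborFinset_eq_filter, ← card_univ, card_eq_sum_ones]
  simp only [card_filter]
  rw [← Fintype.sum_ite_eq' x (fun _ => 1)]
  simp only [← sum_add_distrib]
  refine sum_congr rfl fun v _ => ?_
  by_cases hvx : v = x <;> split_ifs <;> simp_all

end Counting

namespace IsSRGWith

lemma card_filter_adj_adj (hG : G.IsSRGWith n k ℓ μ) {x y : V} (hxy : x ≠ y) :
    #{v | v ≠ x ∧ v ≠ y ∧ G.Adj x v ∧ G.Adj y v} = if G.Adj x y then ℓ else μ := by
  have hcommon : #{v | v ≠ x ∧ v ≠ y ∧ G.Adj x v ∧ G.Adj y v}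
      = Fintype.card (G.commonNeighbors x y) :=
    (Fintype.card_of_finset' _ fun v => by
      simp only [mem_filter, mem_univ, true_and, mem_commonNeighbors]
      exact ⟨fun h => h.2.2, fun h => ⟨(G.ne_of_adj h.1).symm, (G.ne_of_adj h.2).symm, h⟩⟩).symm
  split_ifs with hadj
  · rw [hcommon, hG.of_adj x y hadj]
  · rw [hcommon, hG.of_not_adj hxy hadj]

lemma card_filter_adj_not_adj (hG : G.IsSRGWith n k ℓ μ) {x y : V} (hxy : x ≠ y) :
    (#{v | v ≠ x ∧ v ≠ y ∧ G.Adj x v ∧ ¬G.Adj y v} : ℤ)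
      = if G.Adj x y then (k : ℤ) - ℓ - 1 else (k : ℤ) - μ := by
  have h := congrArg (Nat.cast : ℕ → ℤ) (G.degree_eq_card_filter_adj_add x y)
  rw [hG.regular x, hG.card_filter_adj_adj hxy] at h
  split_ifs at h ⊢ <;> push_cast at h <;> linarith

lemma card_filter_not_adj_not_adj (hG : G.IsSRGWith n k ℓ μ) {x y : V} (hxy : x ≠ y) :
    (#{v | v ≠ x ∧ v ≠ y ∧ ¬G.Adj x v ∧ ¬G.Adj y v} : ℤ)
      = if G.Adj x y then (n : ℤ) - 2 * k + ℓ else (n : ℤ) - 2 - 2 * k + μ := by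
  have hx := hG.card_filter_adj_not_adj hxy
  have hy := hG.card_filter_adj_not_adj hxy.symm
  have h := congrArg (Nat.cast : ℕ → ℤ) (G.card_eq_card_filter_adj_add hxy)
  have hswap : #{v | v ≠ x ∧ v ≠ y ∧ ¬G.Adj x v ∧ G.Adj y v}
      = #{v | v ≠ y ∧ v ≠ x ∧ G.Adj y v ∧ ¬G.Adj x v} := by
    congr 1; ext v; simp only [mem_filter]; tauto
  rw [hG.card, hG.card_filter_adj_adj hxy, hswap] at h
  simp only [G.adj_comm y x] at hy
  split_ifs at h hx hy ⊢ <;> push_cast at h <;> linarith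

lemma card_filter_le_srgTheta (hG : G.IsSRGWith n k ℓ μ) {x y : V} (hxy : x ≠ y)
    (p q : Prop) [Decidable p] [Decidable q] :
    (#{v | v ≠ x ∧ v ≠ y ∧ (G.Adj x v ↔ p) ∧ (G.Adj y v ↔ q)} : ℚ) ≤ srgTheta n k ℓ μ := by
  wlog hpq : p ∨ ¬q generalizing x y p q
  · have hswap : #{v | v ≠ x ∧ v ≠ y ∧ (G.Adj x v ↔ p) ∧ (G.Adj y v ↔ q)}
        = #{v | v ≠ y ∧ v ≠ x ∧ (G.Adj y v ↔ q) ∧ (G.Adj x v ↔ p)} := by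
      congr 1; ext v; simp only [mem_filter]; tauto
    rw [hswap]
    exact this hxy.symm q p (by tauto)
  have : Nonempty V := ⟨x⟩
  have hid := hG.param_eq_int
  have hnn := hG.card_filter_not_adj_not_adj hxy
  obtain ⟨hℓ, hμ, hnμ, hnℓ⟩ : (ℓ : ℚ) ≤ srgTheta n k ℓ μ ∧ (μ : ℚ) ≤ srgTheta n k ℓ μ ∧
      (n : ℚ) - 2 - 2 * k + μ ≤ srgTheta n k ℓ μ ∧ (n : ℚ) - 2 * k + ℓ ≤ srgTheta n k ℓ μ := by
    simp [srgTheta]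
  by_cases hp : p <;> by_cases hq : q <;> simp only [hp, hq, iff_true, iff_false] <;>
    simp only [hp, hq, or_self, not_true_eq_false, not_false_eq_true] at hpq
  · rw [hG.card_filter_adj_adj hxy]
    split_ifs <;> assumption
  · have h := hG.card_filter_adj_not_adj hxy
    split_ifs at h hnn
    · have hb := sub_one_sub_le_max_of_param_eq (Nat.cast_nonneg ℓ) (Nat.cast_nonneg μ) hid
      rw [← h] at hb
      exact (by exact_mod_cast hb : _ ≤ max (μ : ℚ) (n - 2 - 2 * k + μ)).trans (max_le hμ hnμ)
    · have hb := sub_le_max_of_param_eq (Nat.cast_nonneg ℓ) (Nat.cast_nonneg μ)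
        (hnn ▸ Nat.cast_nonneg _) hid
      rw [← h] at hb
      exact (by exact_mod_cast hb : _ ≤ max (ℓ : ℚ) (n - 2 * k + ℓ)).trans (max_le hℓ hnℓ)
  · rw [← Int.cast_natCast, hnn]
    split_ifs <;> push_cast <;> assumption

lemma card_filter_le_two_mul_srgTheta (hG : G.IsSRGWith n k ℓ μ) (x : V)
    (p : Prop) [Decidable p] :
    (#{v | v ≠ x ∧ (G.Adj x v ↔ p)} : ℚ) ≤ 2 * srgTheta n k ℓ μ := by
  have hθ : (k : ℚ) / 2 ≤ srgTheta n k ℓ μ ∧ ((n : ℚ) - k - 1) / 2 ≤ srgTheta n k ℓ μ := by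
    simp [srgTheta]
  have hadj : #{v | v ≠ x ∧ G.Adj x v} = k := by
    rw [← hG.regular x, ← card_neighborFinset_eq_degree, neighborFinset_eq_filter]
    congr 1; ext v
    simpa using fun h => (G.ne_of_adj h).symm
  have hcard := G.card_eq_degree_add_card_filter_not_adj x
  rw [hG.card, hG.regular x] at hcard
  by_cases hp : p <;> simp only [hp, iff_true, iff_false]
  · rw [hadj]; linarith [hθ.1]
  · have : ((n : ℕ) : ℚ) = k + #{v | v ≠ x ∧ ¬G.Adj x v} + 1 := by exact_mod_cast hcard
    linarith [hθ.2]

end IsSRGWith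
end SimpleGraph

section Hadamard

variable {ι : Type*} [Fintype ι] {H : Matrix ι ι ℤ}

lemma PMOne.mul_transpose_apply (hH : PMOne H) (i j : ι) :
    (H * Hᵀ) i j = 2 * #{s | H i s = H j s} - Fintype.card ι := by
  have hterm : ∀ s, H i s * H j s = 2 * (if H i s = H j s then 1 else 0) - 1 := fun s => by
    rcases hH i s with h | h <;> rcases hH j s with h' | h' <;> simp [h, h']
  simp only [mul_apply, transpose_apply, hterm, sum_sub_distrib, ← mul_sum, natCast_card_filter,
    sum_const, card_univ, nsmul_eq_mul, mul_one]

lemma IsBHadamard.two_mul_card_le {α : ℕ} (hH : IsBHadamard α H) {i j : ι} (hij : i ≠ j) :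
    2 * #{s | H i s = H j s} ≤ Fintype.card ι + α := by
  have h := abs_le.mp (hH.2 i j hij)
  rw [hH.1.mul_transpose_apply] at h
  omega

end Hadamard

section HadamardColoring

variable {V W ι : Type*} {G : SimpleGraph V} [DecidableRel G.Adj] {f : W → V}
  {H : Matrix ι ι ℤ}

/-- Colour `0` exactly when `A (f w) (f w') * H s s' = 1`, where `A` is the `±1` adjacency
matrix of `G`. -/
def hadamardColoring (G : SimpleGraph V) [DecidableRel G.Adj] (f : W → V) (H : Matrix ι ι ℤ)
    (v w : W × ι) : Fin 2 :=
  if (G.Adj (f v.1) (f w.1) ↔ H v.2 w.2 = 1) then 0 else 1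

lemma hadamardColoring_comm (hH : H.IsSymm) (v w : W × ι) :
    hadamardColoring G f H v w = hadamardColoring G f H w v := by
  simp only [hadamardColoring, G.adj_comm (f v.1), hH.apply v.2 w.2]

lemma hadamardColoring_eq_iff {v w : W × ι} {t : Fin 2} :
    hadamardColoring G f H v w = t ↔ (G.Adj (f v.1) (f w.1) ↔ (H v.2 w.2 = 1 ↔ t = 0)) := by
  unfold hadamardColoring
  split_ifs <;> fin_cases t <;> simp <;> tauto

end HadamardColoring

lemma exists_le_sum_card_of_hasMonoK2 {V : Type*} {G : SimpleGraph V} [DecidableRel G.Adj]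
    {c ζ m : ℕ} {f : Fin c → V} {H : Matrix (Fin ζ) (Fin ζ) ℤ} {t : Fin 2}
    (h : HasMonoK2 (multiK c ζ) (hadamardColoring G f H) t m) :
    ∃ x y : Fin c, ∃ i j : Fin ζ, (x, i) ≠ (y, j) ∧
      m ≤ ∑ s, #{w | w ≠ x ∧ w ≠ y ∧ (G.Adj (f x) (f w) ↔ (H i s = 1 ↔ t = 0)) ∧
        (G.Adj (f y) (f w) ↔ (H j s = 1 ↔ t = 0))} := by
  obtain ⟨a, b, S, hab, -, -, rfl, hS⟩ := h
  refine ⟨a.1, b.1, a.2, b.2, hab, ?_⟩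
  calc #S ≤ #{v : Fin c × Fin ζ | v.1 ≠ a.1 ∧ v.1 ≠ b.1 ∧
        (G.Adj (f a.1) (f v.1) ↔ (H a.2 v.2 = 1 ↔ t = 0)) ∧
        (G.Adj (f b.1) (f v.1) ↔ (H b.2 v.2 = 1 ↔ t = 0))} := by
        refine card_le_card fun v hv => ?_
        obtain ⟨hav, hbv, hca, hcb⟩ := hS v hv
        simp only [mem_filter, mem_univ, true_and]
        exact ⟨Ne.symm hav, Ne.symm hbv, hadamardColoring_eq_iff.mp hca,
          hadamardColoring_eq_iff.mp hcb⟩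
    _ = _ := by
        simp only [card_filter]
        exact Fintype.sum_prod_type_right _

section LowerBound

variable {V W ι : Type*} [Fintype V] [DecidableEq V] [Fintype W] [DecidableEq W] [Fintype ι]
  {G : SimpleGraph V} [DecidableRel G.Adj] {f : W → V} {H : Matrix ι ι ℤ}

lemma SimpleGraph.IsSRGWith.sum_card_le_of_ne {n k ℓ μ : ℕ} (hG : G.IsSRGWith n k ℓ μ)
    (hf : Function.Injective f) {x y : W} (hxy : x ≠ y) (p q : ι → Prop)
    [DecidablePred p] [DecidablePred q] :
    (∑ s, #{w | w ≠ x ∧ w ≠ y ∧ (G.Adj (f x) (f w) ↔ p s) ∧ (G.Adj (f y) (f w) ↔ q s)} : ℚ)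
      ≤ Fintype.card ι * srgTheta n k ℓ μ := by
  rw [← nsmul_eq_mul, ← card_univ, ← sum_const]
  refine sum_le_sum fun s _ => le_trans ?_ (hG.card_filter_le_srgTheta (hf.ne hxy) (p s) (q s))
  exact_mod_cast card_le_card_of_injOn f
    (fun w hw => by simp_all [hf.ne_iff]) hf.injOn

lemma SimpleGraph.IsSRGWith.sum_card_le_of_eq {n k ℓ μ α : ℕ} (hG : G.IsSRGWith n k ℓ μ)
    (hf : Function.Injective f) (hH : IsBHadamard α H) (x : W) {i j : ι} (hij : i ≠ j)
    (r : Prop) [Decidable r] :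
    (∑ s, #{w | w ≠ x ∧ w ≠ x ∧ (G.Adj (f x) (f w) ↔ (H i s = 1 ↔ r)) ∧
        (G.Adj (f x) (f w) ↔ (H j s = 1 ↔ r))} : ℚ)
      ≤ srgTheta n k ℓ μ * (Fintype.card ι + α) := by
  set θ := srgTheta n k ℓ μ
  have hterm : ∀ s, (#{w | w ≠ x ∧ w ≠ x ∧ (G.Adj (f x) (f w) ↔ (H i s = 1 ↔ r)) ∧
      (G.Adj (f x) (f w) ↔ (H j s = 1 ↔ r))} : ℚ) ≤ if H i s = H j s then 2 * θ else 0 := by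
    intro s
    split_ifs with hs
    · refine le_trans ?_ (hG.card_filter_le_two_mul_srgTheta (f x) (H i s = 1 ↔ r))
      exact_mod_cast card_le_card_of_injOn f
        (fun w hw => by simp_all [hf.ne_iff]) hf.injOn
    · refine (Nat.cast_eq_zero.mpr (card_eq_zero.mpr (filter_false_of_mem ?_))).le
      rintro w - ⟨-, -, hwi, hwj⟩
      rcases hH.1 i s with h | h <;> rcases hH.1 j s with h' | h' <;> simp_all
  calc _ ≤ ∑ s, if H i s = H j s then 2 * θ else 0 := sum_le_sum fun s _ => hterm s
    _ = θ * (2 * #{s | H i s = H j s} : ℕ) := by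
        rw [sum_ite, sum_const_zero, sum_const, nsmul_eq_mul]; push_cast; ring
    _ ≤ θ * (Fintype.card ι + α) := by
        gcongr
        · exact srgTheta_nonneg n k ℓ μ
        · exact_mod_cast hH.two_mul_card_le hij

end LowerBound

lemma SimpleGraph.IsSRGWith.not_arrows {V : Type*} [Fintype V] {G : SimpleGraph V}
    [DecidableRel G.Adj] {n k ℓ μ : ℕ} (hG : G.IsSRGWith n k ℓ μ) {ζ α : ℕ}
    {H : Matrix (Fin ζ) (Fin ζ) ℤ} (hH : IsBHadamard α H) (hHsymm : H.IsSymm) {T : ℕ}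
    (hT : (T : ℚ) = srgTheta n k ℓ μ * (ζ + α)) {c : ℕ} (hc : c ≤ n) :
    ¬ Arrows c ζ (T + 1) 2 := by
  classical
  intro harr
  obtain ⟨f⟩ : Nonempty (Fin c ↪ V) :=
    Function.Embedding.nonempty_of_card_le (by rwa [Fintype.card_fin, hG.card])
  obtain ⟨t, hmono⟩ := harr (hadamardColoring G f H) (hadamardColoring_comm hHsymm)
  obtain ⟨x, y, i, j, hne, hle⟩ := exists_le_sum_card_of_hasMonoK2 hmono
  have hsum : ((T + 1 : ℕ) : ℚ) ≤ srgTheta n k ℓ μ * (ζ + α) := by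
    refine (Nat.cast_le.mpr hle).trans ?_
    push_cast
    rcases eq_or_ne x y with rfl | hxy
    · simpa using hG.sum_card_le_of_eq f.injective hH x (fun hij => hne (by rw [hij])) (t = 0)
    · refine (hG.sum_card_le_of_ne f.injective hxy _ _).trans ?_
      have := srgTheta_nonneg n k ℓ μ
      simp only [Fintype.card_fin]
      nlinarith [(Nat.cast_nonneg α : (0 : ℚ) ≤ α)]
  push_cast at hsum
  linarith

section UpperBound

variable {V : Type*} [Fintype V] {G : SimpleGraph V} [DecidableRel G.Adj]
  {k : ℕ} {C : V → V → Fin k}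

def colorNeighborFinset (G : SimpleGraph V) [DecidableRel G.Adj] (C : V → V → Fin k)
    (t : Fin k) (v : V) : Finset V :=
  {w | G.Adj v w ∧ C v w = t}

@[simp]
lemma mem_colorNeighborFinset {t : Fin k} {v w : V} :
    w ∈ colorNeighborFinset G C t v ↔ G.Adj v w ∧ C v w = t := by
  simp [colorNeighborFinset]

variable [DecidableEq V]

lemma card_colorNeighborFinset_add (C : V → V → Fin 2) (v : V) :
    #(colorNeighborFinset G C 0 v) + #(colorNeighborFinset G C 1 v) = G.degree v := by
  rw [← G.card_neighborFinset_eq_degree, ← card_union_of_disjoint]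
  · congr 1; ext w
    simp only [mem_union, mem_colorNeighborFinset, SimpleGraph.mem_neighborFinset]
    have := (by decide : ∀ i : Fin 2, i = 0 ∨ i = 1) (C v w)
    tauto
  · exact disjoint_left.mpr fun w h0 h1 => by
      simp only [mem_colorNeighborFinset] at h0 h1
      exact absurd (h0.2.symm.trans h1.2) (by decide)

lemma card_filter_mem_le_of_not_hasMonoK2 (hC : ∀ v w, C v w = C w v) {t : Fin k} {T : ℕ}
    (h : ¬ HasMonoK2 G C t (T + 1)) {a b : V} (hab : a ≠ b) :
    #{v | a ∈ colorNeighborFinset G C t v ∧ b ∈ colorNeighborFinset G C t v} ≤ T := by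
  by_contra! hlt
  obtain ⟨S, hS, hcard⟩ := exists_subset_card_eq (Nat.succ_le_of_lt hlt)
  have hmem : ∀ v ∈ S, G.Adj a v ∧ G.Adj b v ∧ C a v = t ∧ C b v = t := fun v hv => by
    have := hS hv
    simp only [mem_filter, mem_univ, true_and, mem_colorNeighborFinset] at this
    exact ⟨this.1.1.symm, this.2.1.symm, hC a v ▸ this.1.2, hC b v ▸ this.2.2⟩
  exact h ⟨a, b, S, hab, fun ha => G.loopless.irrefl a (hmem a ha).1,
    fun hb => G.loopless.irrefl b (hmem b hb).2.1, hcard, hmem⟩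

lemma sum_card_offDiag_le_of_not_hasMonoK2 (hC : ∀ v w, C v w = C w v) {t : Fin k} {T : ℕ}
    (h : ¬ HasMonoK2 G C t (T + 1)) :
    ∑ v, #(colorNeighborFinset G C t v).offDiag
      ≤ (Fintype.card V * Fintype.card V - Fintype.card V) * T := by
  let r : V → V × V → Prop := fun v p =>
    p.1 ∈ colorNeighborFinset G C t v ∧ p.2 ∈ colorNeighborFinset G C t v
  have hcount := sum_card_bipartiteAbove_eq_sum_card_bipartiteBelow (s := univ)
    (t := (univ : Finset V).offDiag) (r := r)
  have habove : ∀ v, (univ : Finset V).offDiag.bipartiteAbove r v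
      = (colorNeighborFinset G C t v).offDiag := fun v => by
    ext p; simp only [bipartiteAbove, mem_filter, mem_offDiag, mem_univ, true_and, r]; tauto
  simp only [habove] at hcount
  rw [hcount, ← card_univ, ← offDiag_card, ← smul_eq_mul, ← sum_const]
  exact sum_le_sum fun p hp =>
    card_filter_mem_le_of_not_hasMonoK2 hC h (mem_offDiag.mp hp).2.2

theorem exists_hasMonoK2_of_isRegularOfDegree [Nonempty V] {D T : ℕ}
    (hG : G.IsRegularOfDegree D) {C : V → V → Fin 2} (hC : ∀ v w, C v w = C w v)
    (h : 4 * ((Fintype.card V : ℚ) - 1) * T < D * ((D : ℚ) - 2)) :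
    ∃ t, HasMonoK2 G C t (T + 1) := by
  by_contra! hno
  set N := Fintype.card V
  have hN : (0 : ℚ) < N := by exact_mod_cast Fintype.card_pos
  have hoff : ∀ s : Finset V, (#s.offDiag : ℚ) = #s * #s - #s := fun s => by
    rw [offDiag_card, Nat.cast_sub (Nat.le_mul_self _)]; push_cast; ring
  have hvertex : ∀ v,
      (D : ℚ) * (D - 2) / 2 ≤ ∑ t, (#(colorNeighborFinset G C t v).offDiag : ℚ) := by
    intro v
    have hdeg : (#(colorNeighborFinset G C 0 v) : ℚ) + #(colorNeighborFinset G C 1 v) = D := by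
      exact_mod_cast (card_colorNeighborFinset_add C v).trans (hG v)
    rw [Fin.sum_univ_two, hoff, hoff]
    nlinarith [sq_nonneg ((#(colorNeighborFinset G C 0 v) : ℚ) - #(colorNeighborFinset G C 1 v))]
  have hcolor : ∀ t, (∑ v, (#(colorNeighborFinset G C t v).offDiag : ℚ)) ≤ (N * N - N) * T := by
    intro t
    have := sum_card_offDiag_le_of_not_hasMonoK2 hC (hno t)
    rwa [← Nat.cast_le (α := ℚ), Nat.cast_sum, Nat.cast_mul, Nat.cast_sub (Nat.le_mul_self _),
      Nat.cast_mul] at this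
  have : N * ((D : ℚ) * (D - 2) / 2) ≤ 2 * ((N * N - N) * T) :=
    calc N * ((D : ℚ) * (D - 2) / 2) = ∑ _v : V, (D : ℚ) * (D - 2) / 2 := by simp [N]
      _ ≤ ∑ v, ∑ t, (#(colorNeighborFinset G C t v).offDiag : ℚ) :=
          sum_le_sum fun v _ => hvertex v
      _ = ∑ t, ∑ v, (#(colorNeighborFinset G C t v).offDiag : ℚ) := sum_comm
      _ ≤ 2 * ((N * N - N) * T) := by
        rw [Fin.sum_univ_two]; linarith [hcolor 0, hcolor 1]
  nlinarith

end UpperBound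

instance (c s : ℕ) : DecidableRel (multiK c s).Adj :=
  fun v w => inferInstanceAs (Decidable (v.1 ≠ w.1))

lemma multiK_isRegularOfDegree (c s : ℕ) : (multiK c s).IsRegularOfDegree ((c - 1) * s) := by
  intro v
  have : (multiK c s).neighborFinset v = (univ.erase v.1) ×ˢ univ := by
    ext w; rw [SimpleGraph.mem_neighborFinset]; simp [multiK, eq_comm]
  rw [← SimpleGraph.card_neighborFinset_eq_degree, this, card_product,
    card_erase_of_mem (mem_univ _)]
  simp

lemma arrows_of_lt {c s T : ℕ} (hc : 0 < c) (hs : 0 < s)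
    (h : 4 * ((c : ℚ) * s - 1) * T < ((c : ℚ) - 1) * s * (((c : ℚ) - 1) * s - 2)) :
    Arrows c s (T + 1) 2 := fun C hC => by
  have : Nonempty (Fin c × Fin s) := ⟨(⟨0, hc⟩, ⟨0, hs⟩)⟩
  refine exists_hasMonoK2_of_isRegularOfDegree (multiK_isRegularOfDegree c s) hC ?_
  simpa [Nat.cast_sub hc] using h

lemma setRamsey_le {c s m k : ℕ} (hc : 0 < c) (h : Arrows c s m k) : setRamsey s m k ≤ c :=
  Nat.sInf_le ⟨hc, h⟩

lemma lt_setRamsey {n s m k : ℕ} (hne : ∃ c, 0 < c ∧ Arrows c s m k)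
    (h : ∀ c ≤ n, ¬ Arrows c s m k) : n < setRamsey s m k := by
  by_contra! hle
  exact h _ hle (Nat.sInf_mem hne).2

lemma four_mul_lt_of_le_mul {θ α ζ m c : ℚ} (hθ : 0 ≤ θ) (hα : 0 ≤ α) (hζ : 2 ≤ ζ)
    (hm : 4 * θ * α + 1 ≤ m * ζ) (hc : c = 4 * θ + 2 + m) :
    4 * (c * ζ - 1) * (θ * (ζ + α)) < (c - 1) * ζ * ((c - 1) * ζ - 2) := by
  subst hc
  nlinarith [mul_nonneg hθ hα, mul_nonneg hθ (by linarith : (0:ℚ) ≤ ζ)]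

theorem statement2_general {V : Type*} [Fintype V] (G : SimpleGraph V) [DecidableRel G.Adj]
    (n k ℓ μ : ℕ) (hG : G.IsSRGWith n k ℓ μ)
    (ζ α : ℕ) (hζ : 2 ≤ ζ)
    (H : Matrix (Fin ζ) (Fin ζ) ℤ) (hH : IsBHadamard α H) (hHsymm : H.IsSymm)
    (θ : ℚ)
    (hθ : θ = max (max (max ((k : ℚ) / 2) (ℓ : ℚ)) (max ((μ : ℚ)) (((n : ℚ) - k - 1) / 2)))
      (max ((n : ℚ) - 2 - 2 * k + μ) ((n : ℚ) - 2 * k + ℓ)))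
    (T : ℕ) (hT : (T : ℚ) = θ * (ζ + α)) :
    n + 1 ≤ setRamsey ζ (T + 1) 2 ∧
    (setRamsey ζ (T + 1) 2 : ℚ) ≤ 4 * θ + 2 + (⌈(4 * θ * α + 1) / (ζ : ℚ)⌉ : ℚ) := by
  change θ = srgTheta n k ℓ μ at hθ
  subst hθ
  set m := ⌈(4 * srgTheta n k ℓ μ * α + 1) / (ζ : ℚ)⌉
  have hζ₀ : (0 : ℚ) < ζ := by positivity
  have hθ₀ := srgTheta_nonneg n k ℓ μ
  have hm : 4 * srgTheta n k ℓ μ * α + 1 ≤ m * ζ := (div_le_iff₀ hζ₀).mp (Int.le_ceil _)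
  have hm₀ : 0 < m := Int.ceil_pos.mpr (by positivity)
  obtain ⟨c, hc₀, hc⟩ := exists_natCast_eq_four_mul_srgTheta_add n k ℓ μ hm₀.le
  have harrows : Arrows c ζ (T + 1) 2 := arrows_of_lt hc₀ (by omega)
    (hT ▸ four_mul_lt_of_le_mul hθ₀ (Nat.cast_nonneg α) (by exact_mod_cast hζ) hm hc)
  exact ⟨lt_setRamsey ⟨c, hc₀, harrows⟩ fun c' hc' => hG.not_arrows hH hHsymm hT hc',
    hc ▸ Nat.cast_le.mpr (setRamsey_le hc₀ harrows)⟩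

/-- **Theorem (bounds for the set multipartite Ramsey number).**
If `G` is a strongly regular graph with parameters `(n,k,ℓ,μ)`, `H` is a symmetric
`[α]`-Hadamard matrix of order `ζ ≥ 2` (with `α ≤ ζ`),
`θ = max {k/2, ℓ, μ, (n-k-1)/2, n-2-2k+μ, n-2k+ℓ}` (taken in `ℚ`), and moreover
`ζ` is even or `⌈(4θα+1)/ζ⌉ - 1` is even, then
`n + 1 ≤ M_ζ(K_{2, θ(ζ+α)+1}; 2) ≤ 4θ + 2 + ⌈(4θα+1)/ζ⌉`. -/
theorem statement2 {V : Type*} [Fintype V] (G : SimpleGraph V) [DecidableRel G.Adj]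
    (n k ℓ μ : ℕ) (hG : G.IsSRGWith n k ℓ μ)
    (ζ α : ℕ) (hζ : 2 ≤ ζ) (hα : α ≤ ζ)
    (H : Matrix (Fin ζ) (Fin ζ) ℤ) (hH : IsBHadamard α H) (hHsymm : H.IsSymm)
    (θ : ℚ)
    (hθ : θ = max (max (max ((k : ℚ) / 2) (ℓ : ℚ)) (max ((μ : ℚ)) (((n : ℚ) - k - 1) / 2)))
      (max ((n : ℚ) - 2 - 2 * k + μ) ((n : ℚ) - 2 * k + ℓ)))
    (T : ℕ) (hT : (T : ℚ) = θ * (ζ + α))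
    (hpar : Even ζ ∨ Even (⌈(4 * θ * α + 1) / (ζ : ℚ)⌉ - 1)) :
    n + 1 ≤ setRamsey ζ (T + 1) 2 ∧
    (setRamsey ζ (T + 1) 2 : ℚ) ≤ 4 * θ + 2 + (⌈(4 * θ * α + 1) / (ζ : ℚ)⌉ : ℚ) :=
  statement2_general G n k ℓ μ hG ζ α hζ H hH hHsymm θ hθ T hT
end

section
/- Let p be a prime number and α > 0 an integer with p^α ≡ 1 (mod 4). Then there exists a [4]-Hadamard matrix of order 2p^α, namely the matrix H = Q⊗[[1,1],[1,−1]] + I⊗[[1,−1],[−1,−1]], where Q(i,j) = χ(a_i − a_j) is the Paley matrix built from the quadratic character χ of GF(p^α) and ⊗ denotes the Kronecker product: every off-diagonal entry of H·Hᵗ has absolute value at most 4. -/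
open Finset Matrix

open Kronecker

/-- The Paley matrix of a finite field `F`: `Q i j = χ(i - j)` where `χ` is the quadratic
character of `F`. -/
def paleyMatrix (F : Type*) [Field F] [Fintype F] [DecidableEq F] : Matrix F F ℤ :=
  Matrix.of fun i j => quadraticChar F (i - j)

/-!
With `A = [[1,1],[1,-1]]` and `B = [[1,-1],[-1,-1]]` one has `A Aᵀ = B Bᵀ = 2` and
`A Bᵀ + B Aᵀ = 0`. Since `-1` is a square when `q ≡ 1 (mod 4)`, the Paley matrix `Q` is symmetric,
so the cross terms cancel and `H Hᵀ = (Q Qᵀ + 1) ⊗ 2`. Off the diagonal, `Q Qᵀ` is a shifted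
autocorrelation of `χ`; an affine substitution turns it into `χ(-1)` times the Jacobi sum
`J(χ, χ⁻¹) = -χ(-1)`, so it equals `-1`. Hence every off-diagonal entry of `H Hᵀ` is `0` or `-2`.
-/

section QuadraticChar

variable {F : Type*} [Field F] [Fintype F]

theorem ringChar_ne_two_of_card_mod_four_eq_one (h : Fintype.card F % 4 = 1) :
    ringChar F ≠ 2 := fun h2 => by
  have := FiniteField.even_card_of_char_two h2
  omega

variable [DecidableEq F]

theorem quadraticChar_neg_of_card_mod_four_ne_three (h : Fintype.card F % 4 ≠ 3) (x : F) :
    quadraticChar F (-x) = quadraticChar F x := by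
  have hneg : quadraticChar F (-1) = 1 :=
    (quadraticChar_one_iff_isSquare (neg_ne_zero.mpr one_ne_zero)).mpr
      (FiniteField.isSquare_neg_one_iff.mpr h)
  rw [neg_eq_neg_one_mul, map_mul, hneg, one_mul]

theorem sum_quadraticChar_sub_mul_quadraticChar_sub (hF : ringChar F ≠ 2) {a b : F}
    (hab : a ≠ b) :
    ∑ x : F, quadraticChar F (a - x) * quadraticChar F (b - x) = -1 := by
  set χ := quadraticChar F
  have hd : a - b ≠ 0 := sub_ne_zero.mpr hab
  have hJ : ∑ x : F, χ x * χ (1 - x) = -χ (-1) := by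
    have := jacobiSum_nontrivial_inv (quadraticChar_ne_one hF)
    rwa [(quadraticChar_isQuadratic F).inv] at this
  let e : F ≃ F := (Equiv.mulLeft₀ (a - b) hd).trans (Equiv.subLeft a)
  calc ∑ x : F, χ (a - x) * χ (b - x)
      = ∑ x : F, χ (a - e x) * χ (b - e x) := (e.sum_comp _).symm
    _ = ∑ x : F, χ (-1) * (χ x * χ (1 - x)) := by
        refine Finset.sum_congr rfl fun x _ => ?_
        have hsq : χ (a - b) * χ (a - b) = 1 := by rw [← sq, quadraticChar_sq_one hd]
        simp only [e, Equiv.trans_apply, Equiv.mulLeft₀_apply, Equiv.subLeft_apply]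
        rw [show a - (a - (a - b) * x) = (a - b) * x by ring,
          show b - (a - (a - b) * x) = -1 * ((a - b) * (1 - x)) by ring]
        simp only [map_mul]
        linear_combination (χ (-1) * χ x * χ (1 - x)) * hsq
    _ = -1 := by
        rw [← Finset.mul_sum, hJ, mul_neg, ← sq,
          quadraticChar_sq_one (neg_ne_zero.mpr one_ne_zero)]

end QuadraticChar

section Paley

variable {F : Type*} [Field F] [Fintype F] [DecidableEq F]

theorem paleyMatrix_apply_self (i : F) : paleyMatrix F i i = 0 := by
  simp [paleyMatrix]

theorem paleyMatrix_apply_of_ne {i j : F} (hij : i ≠ j) :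
    paleyMatrix F i j = 1 ∨ paleyMatrix F i j = -1 :=
  quadraticChar_dichotomy (sub_ne_zero.mpr hij)

theorem paleyMatrix_transpose (h : Fintype.card F % 4 ≠ 3) :
    (paleyMatrix F)ᵀ = paleyMatrix F := by
  ext i j
  simp only [transpose_apply, paleyMatrix, of_apply]
  rw [← neg_sub, quadraticChar_neg_of_card_mod_four_ne_three h]

theorem paleyMatrix_mul_transpose_apply_of_ne (hF : ringChar F ≠ 2) {i j : F} (hij : i ≠ j) :
    (paleyMatrix F * (paleyMatrix F)ᵀ) i j = -1 := by
  simpa [mul_apply, paleyMatrix] using sum_quadraticChar_sub_mul_quadraticChar_sub hF hij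

end Paley

section Kronecker

variable {m n : Type*} [DecidableEq m]

theorem pmOne_kronecker_add_one_kronecker {Q : Matrix m m ℤ} {A B : Matrix n n ℤ}
    (hQd : ∀ i, Q i i = 0) (hQ : ∀ i j, i ≠ j → Q i j = 1 ∨ Q i j = -1)
    (hA : PMOne A) (hB : PMOne B) : PMOne (Q ⊗ₖ A + 1 ⊗ₖ B) := by
  rintro ⟨i, a⟩ ⟨j, b⟩
  simp only [Matrix.add_apply, kroneckerMap_apply, one_apply]
  by_cases hij : i = j
  · subst hij
    simpa [hQd] using hB a b
  · rcases hQ i j hij with hQ | hQ <;> rcases hA a b with hA | hA <;> simp [hQ, hA, hij]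

theorem kronecker_add_one_kronecker_mul_transpose {R : Type*} [CommRing R] [Fintype m]
    [Fintype n] {Q : Matrix m m R} (hQ : Qᵀ = Q) {A B : Matrix n n R} (hAB : A * Bᵀ + B * Aᵀ = 0) :
    (Q ⊗ₖ A + 1 ⊗ₖ B) * (Q ⊗ₖ A + 1 ⊗ₖ B)ᵀ = (Q * Qᵀ) ⊗ₖ (A * Aᵀ) + 1 ⊗ₖ (B * Bᵀ) := by
  have hcross : (Q * 1) ⊗ₖ (A * Bᵀ) + (1 * Qᵀ) ⊗ₖ (B * Aᵀ) = 0 := by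
    rw [mul_one, one_mul, hQ, ← kronecker_add, hAB, kronecker_zero]
  simp only [transpose_add, ← kroneckerMap_transpose, transpose_one, add_mul, mul_add,
    ← mul_kronecker_mul]
  rw [Matrix.mul_one (1 : Matrix m m R), ← sub_eq_zero, ← hcross]
  abel

end Kronecker

theorem IsBHadamard.reindex {ι κ : Type*} [Fintype ι] [Fintype κ] {α : ℕ} {H : Matrix ι ι ℤ}
    (h : IsBHadamard α H) (e : ι ≃ κ) : IsBHadamard α (Matrix.reindex e e H) :=
  ⟨fun _ _ => h.1 _ _, fun i j hij => by
    simpa [← submatrix_mul_transpose_submatrix] using h.2 _ _ (e.symm.injective.ne hij)⟩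

theorem isBHadamard_paleyMatrix_kronecker {F : Type*} [Field F] [Fintype F] [DecidableEq F]
    (hF : Fintype.card F % 4 = 1) :
    IsBHadamard 4 (paleyMatrix F ⊗ₖ !![1, 1; 1, -1] + (1 : Matrix F F ℤ) ⊗ₖ !![1, -1; -1, -1]) := by
  have hA : !![(1 : ℤ), 1; 1, -1] * !![(1 : ℤ), 1; 1, -1]ᵀ = 2 • 1 := by
    ext i j; fin_cases i <;> fin_cases j <;> rfl
  have hB : !![(1 : ℤ), -1; -1, -1] * !![(1 : ℤ), -1; -1, -1]ᵀ = 2 • 1 := by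
    ext i j; fin_cases i <;> fin_cases j <;> rfl
  have hAB : !![(1 : ℤ), 1; 1, -1] * !![(1 : ℤ), -1; -1, -1]ᵀ
      + !![(1 : ℤ), -1; -1, -1] * !![(1 : ℤ), 1; 1, -1]ᵀ = 0 := by
    ext i j; fin_cases i <;> fin_cases j <;> rfl
  refine ⟨pmOne_kronecker_add_one_kronecker paleyMatrix_apply_self
    (fun _ _ => paleyMatrix_apply_of_ne) (fun i j => by fin_cases i <;> fin_cases j <;> simp)
    (fun i j => by fin_cases i <;> fin_cases j <;> simp), ?_⟩
  rintro ⟨i, a⟩ ⟨j, b⟩ hne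
  rw [kronecker_add_one_kronecker_mul_transpose (paleyMatrix_transpose (by omega)) hAB, hA, hB,
    ← add_kronecker, kroneckerMap_apply]
  by_cases hab : a = b
  · subst hab
    have hij : i ≠ j := fun h => hne (h ▸ rfl)
    simp [paleyMatrix_mul_transpose_apply_of_ne (ringChar_ne_two_of_card_mod_four_eq_one hF) hij,
      hij]
  · simp [hab]

theorem statement8_general (p : ℕ) (α : ℕ) (hmod : p ^ α % 4 = 1)
    (F : Type) [Field F] [Fintype F] [DecidableEq F] (hF : Fintype.card F = p ^ α) :
    (∃ H : Matrix (Fin (2 * p ^ α)) (Fin (2 * p ^ α)) ℤ, IsBHadamard 4 H) ∧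
    IsBHadamard 4 (paleyMatrix F ⊗ₖ !![1, 1; 1, -1] +
      (1 : Matrix F F ℤ) ⊗ₖ !![1, -1; -1, -1]) := by
  have hH := isBHadamard_paleyMatrix_kronecker (F := F) (hF ▸ hmod)
  have hcard : Fintype.card (F × Fin 2) = 2 * p ^ α := by
    rw [Fintype.card_prod, Fintype.card_fin, hF, mul_comm]
  exact ⟨⟨_, hH.reindex (Fintype.equivFinOfCardEq hcard)⟩, hH⟩

/-- **Theorem.** Let `p` be a prime and `α > 0` with `p^α ≡ 1 (mod 4)`. Then there exists a
`[4]`-Hadamard matrix of order `2p^α`, namely (for `F = GF(p^α)` with Paley matrix `Q`) the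
matrix `H = Q ⊗ [[1,1],[1,-1]] + I ⊗ [[1,-1],[-1,-1]]`: every entry of `H` is `±1` and every
off-diagonal entry of `H * Hᵀ` has absolute value at most `4`. -/
theorem statement8 (p : ℕ) (hp : p.Prime) (α : ℕ) (hα : 0 < α) (hmod : p ^ α % 4 = 1)
    (F : Type) [Field F] [Fintype F] [DecidableEq F] (hF : Fintype.card F = p ^ α) :
    (∃ H : Matrix (Fin (2 * p ^ α)) (Fin (2 * p ^ α)) ℤ, IsBHadamard 4 H) ∧
    IsBHadamard 4 (paleyMatrix F ⊗ₖ !![1, 1; 1, -1] +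
      (1 : Matrix F F ℤ) ⊗ₖ !![1, -1; -1, -1]) :=
  statement8_general p α hmod F hF
end
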